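/- arXiv:1710.05197 — 4 statements merged into one kernel-verified Lean document; each statement's English description precedes it below -/
import Mathlib

section
/- Let G act by isometries on metric spaces S and T, and suppose the actions dominate each other: there exist points s ∈ S, t ∈ T and a constant C with d_S(s, gs) ≤ C d_T(t, gt) + C and d_T(t, gt) ≤ C d_S(s, gs) + C for all g ∈ G. Then the actions are coarsely isospectral: for any sequence (g_i) in G, τ_S(g_i) → ∞ if and only if τ_T(g_i) → ∞, where τ_S, τ_T denote translation numbers. -/
open Filter Topology

private lemma aux6 {G X Y : Type*} [Group G] [MetricSpace X] [MetricSpace Y]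
    [MulAction G X] [MulAction G Y] (s : X) (t : Y) (C : ℝ) (hC : 0 ≤ C)
    (h : ∀ g : G, dist s (g • s) ≤ C * dist t (g • t) + C)
    (τS τT : G → ℝ)
    (hτS : ∀ g : G, Tendsto (fun n : ℕ => dist s (g ^ n • s) / n) atTop (𝓝 (τS g)))
    (hτT : ∀ g : G, Tendsto (fun n : ℕ => dist t (g ^ n • t) / n) atTop (𝓝 (τT g)))
    (g : G) : τS g ≤ (C + 1) * τT g := by
  have hlim : Tendsto (fun n : ℕ => (C + 1) * (dist t (g ^ n • t) / n) + (C + 1) / n)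
      atTop (𝓝 ((C + 1) * τT g + 0)) :=
    ((hτT g).const_mul _).add (tendsto_const_div_atTop_nhds_zero_nat _)
  rw [add_zero] at hlim
  refine le_of_tendsto_of_tendsto' (hτS g) hlim (fun n => ?_)
  rcases Nat.eq_zero_or_pos n with hn | hn
  · simp [hn]
  · have hnpos : (0 : ℝ) < n := by exact_mod_cast hn
    have h1 : dist s (g ^ n • s) ≤ (C + 1) * dist t (g ^ n • t) + (C + 1) := by
      have := h (g ^ n)
      nlinarith [dist_nonneg (x := t) (y := g ^ n • t)]
    calc dist s (g ^ n • s) / n ≤ ((C + 1) * dist t (g ^ n • t) + (C + 1)) / n :=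
          div_le_div_of_nonneg_right h1 hnpos.le |>.trans_eq rfl
      _ = (C + 1) * (dist t (g ^ n • t) / n) + (C + 1) / n := by ring

/-- Mutually dominating isometric actions are coarsely isospectral: translation numbers of a
sequence of group elements go to infinity for one action iff they do for the other. -/
theorem stmt6 {G S T : Type*} [Group G] [MetricSpace S] [MetricSpace T]
    [MulAction G S] [MulAction G T]
    (hisoS : ∀ g : G, Isometry (fun p : S => g • p))
    (hisoT : ∀ g : G, Isometry (fun p : T => g • p))
    (s : S) (t : T) (C : ℝ)
    (h1 : ∀ g : G, dist s (g • s) ≤ C * dist t (g • t) + C)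
    (h2 : ∀ g : G, dist t (g • t) ≤ C * dist s (g • s) + C)
    (τS τT : G → ℝ)
    (hτS : ∀ g : G, Tendsto (fun n : ℕ => dist s (g ^ n • s) / n) atTop (𝓝 (τS g)))
    (hτT : ∀ g : G, Tendsto (fun n : ℕ => dist t (g ^ n • t) / n) atTop (𝓝 (τT g)))
    (gs : ℕ → G) :
    Tendsto (fun i => τS (gs i)) atTop atTop ↔ Tendsto (fun i => τT (gs i)) atTop atTop := by
  have hC : 0 ≤ C := by have := h1 1; simpa using this
  have hCpos : (0 : ℝ) < C + 1 := by linarith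
  have kST := aux6 s t C hC h1 τS τT hτS hτT
  have kTS := aux6 t s C hC h2 τT τS hτT hτS
  constructor
  · intro hS
    have : Tendsto (fun i => τS (gs i) / (C + 1)) atTop atTop :=
      hS.atTop_div_const hCpos
    exact tendsto_atTop_mono (fun i => (div_le_iff₀ hCpos).2 (by
      have := kST (gs i); linarith)) this
  · intro hT
    have : Tendsto (fun i => τT (gs i) / (C + 1)) atTop atTop :=
      hT.atTop_div_const hCpos
    exact tendsto_atTop_mono (fun i => (div_le_iff₀ hCpos).2 (by
      have := kTS (gs i); linarith)) this
end

section
/- Let x₀, x₁, …, x_n be points in a δ-hyperbolic geodesic space S such that (x_{i−1} | x_{i+1})_{x_i} ≤ C for 1 ≤ i ≤ n−1 and d(x_{i−1}, x_i) > 2C + 16δ for 1 ≤ i ≤ n. Then d(x₀, x_n) ≥ Σ_{i=1}^{n} d(x_{i−1}, x_i) − 2(n−1)(C + 8δ). -/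
/-- The Gromov product `(x|y)_t`. -/
noncomputable def gp {S : Type*} [MetricSpace S] (t x y : S) : ℝ :=
  (dist x t + dist y t - dist x y) / 2

private lemma aux10 {S : Type*} [MetricSpace S] (δ C : ℝ) (hδ : 0 ≤ δ)
    (hhyp : ∀ x y z t : S, min (gp t x y) (gp t y z) - 8 * δ ≤ gp t x z)
    (n : ℕ) (x : ℕ → S)
    (hgp : ∀ i : ℕ, i + 2 ≤ n → gp (x (i + 1)) (x i) (x (i + 2)) ≤ C)
    (hd : ∀ i : ℕ, i + 1 ≤ n → 2 * C + 16 * δ < dist (x i) (x (i + 1))) :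
    ∀ m : ℕ, m + 1 ≤ n →
      ((∑ i ∈ Finset.range (m + 1), dist (x i) (x (i + 1))) - 2 * (m : ℝ) * (C + 8 * δ)
        ≤ dist (x 0) (x (m + 1))) ∧ C + 8 * δ < gp (x (m + 1)) (x 0) (x m) := by
  intro m
  induction m with
  | zero =>
    intro h
    have h0 := hd 0 h
    have hnn : (0 : ℝ) ≤ dist (x 0) (x 1) := dist_nonneg
    constructor
    · simp
    · simp [gp, dist_comm]
      linarith
  | succ m ih =>
    intro h
    obtain ⟨ih1, ih2⟩ := ih (by omega)
    have hgpm := hgp m h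
    have hdm := hd (m + 1) h
    have hh := hhyp (x m) (x 0) (x (m + 2)) (x (m + 1))
    -- show gp (x (m+1)) (x 0) (x (m+2)) ≤ C + 8δ
    have key : gp (x (m + 1)) (x 0) (x (m + 2)) ≤ C + 8 * δ := by
      rcases min_cases (gp (x (m + 1)) (x m) (x 0)) (gp (x (m + 1)) (x 0) (x (m + 2))) with
        ⟨heq, hle⟩ | ⟨heq, hle⟩
      · -- min is gp _ (x m) (x 0); but that's > C + 8δ, contradiction path
        exfalso
        have hsym : gp (x (m + 1)) (x m) (x 0) = gp (x (m + 1)) (x 0) (x m) := by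
          simp [gp, dist_comm]
          ring
        rw [heq, hsym] at hh
        linarith
      · rw [heq] at hh
        linarith
    constructor
    · rw [Finset.sum_range_succ]
      have hident : dist (x 0) (x (m + 2)) =
          dist (x 0) (x (m + 1)) + dist (x (m + 1)) (x (m + 2))
            - 2 * gp (x (m + 1)) (x 0) (x (m + 2)) := by
        simp [gp, dist_comm]
        ring
      push_cast
      rw [hident]
      linarith
    · have hident2 : gp (x (m + 2)) (x 0) (x (m + 1)) =
          dist (x (m + 1)) (x (m + 2)) - gp (x (m + 1)) (x 0) (x (m + 2)) := by
        simp [gp, dist_comm]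
        ring
      rw [hident2]
      linarith

/-- In a δ-hyperbolic space (four-point condition with constant `8δ`), a chain of points
`x₀, …, x_n` with small Gromov products at consecutive triples and long consecutive
distances satisfies `d(x₀, x_n) ≥ Σ d(x_{i−1}, x_i) − 2(n−1)(C + 8δ)`. -/
theorem stmt10 {S : Type*} [MetricSpace S] (δ C : ℝ) (hδ : 0 ≤ δ)
    (hhyp : ∀ x y z t : S, min (gp t x y) (gp t y z) - 8 * δ ≤ gp t x z)
    (n : ℕ) (x : ℕ → S)
    (hgp : ∀ i : ℕ, i + 2 ≤ n → gp (x (i + 1)) (x i) (x (i + 2)) ≤ C)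
    (hd : ∀ i : ℕ, i + 1 ≤ n → 2 * C + 16 * δ < dist (x i) (x (i + 1))) :
    (∑ i ∈ Finset.range n, dist (x i) (x (i + 1))) - 2 * ((n - 1 : ℕ) : ℝ) * (C + 8 * δ)
      ≤ dist (x 0) (x n) := by
  cases n with
  | zero => simp
  | succ m =>
    have := (aux10 δ C hδ hhyp (m + 1) x hgp hd m le_rfl).1
    simpa using this
end

section
/- Let G be a group acting cocompactly (with finitely many orbits of edges) by graph automorphisms on a connected graph Δ, and let G act by isometries on a metric space S such that for every vertex v of Δ, the stabilizer Stab_G(v) has bounded orbits in S. Then the action G ↷ S is dominated by G ↷ Δ: for any s ∈ S and vertex v₀ ∈ Δ there is a constant C with d_S(s, gs) ≤ C · d_Δ(v₀, g v₀) + C for all g ∈ G. -/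
/-- If `G` acts cocompactly (finitely many orbits of edges) by automorphisms on a connected
graph `Δ` and by isometries on a metric space `S` such that every vertex stabilizer has
bounded orbits in `S`, then the action on `S` is dominated by the action on `Δ`. -/
theorem stmt14 {G V S : Type*} [Group G] [MetricSpace S] [MulAction G V] [MulAction G S]
    (Γ : SimpleGraph V) (hconn : Γ.Connected)
    (hauto : ∀ (g : G) (u v : V), Γ.Adj u v → Γ.Adj (g • u) (g • v))
    (hcocompact : ∃ E : Set (V × V), E.Finite ∧ ∀ u v : V, Γ.Adj u v →
      ∃ g : G, ∃ e ∈ E, g • e.1 = u ∧ g • e.2 = v)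
    (hiso : ∀ g : G, Isometry (fun p : S => g • p))
    (hstab : ∀ (v : V) (s : S), ∃ r : ℝ, ∀ g : G, g • v = v → dist s (g • s) ≤ r)
    (s : S) (v₀ : V) :
    ∃ C : ℝ, ∀ g : G, dist s (g • s) ≤ C * (Γ.dist v₀ (g • v₀) : ℝ) + C := by
  classical
  -- subadditivity of displacement
  have sub : ∀ a b : G, dist s ((a * b) • s) ≤ dist s (a • s) + dist s (b • s) := by
    intro a b
    rw [mul_smul]
    calc dist s (a • b • s) ≤ dist s (a • s) + dist (a • s) (a • b • s) := dist_triangle _ _ _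
      _ = dist s (a • s) + dist s (b • s) := by
          have := (hiso a).dist_eq s (b • s)
          rw [this]
  -- transporter bounds
  have hF : ∀ a b : V, ∃ r : ℝ, 0 ≤ r ∧ ∀ k : G, k • a = b → dist s (k • s) ≤ r := by
    intro a b
    by_cases h : ∃ k₀ : G, k₀ • a = b
    · obtain ⟨k₀, hk₀⟩ := h
      obtain ⟨r, hr⟩ := hstab a s
      refine ⟨max 0 (dist s (k₀ • s) + r), le_max_left _ _, ?_⟩
      intro k hk
      have hfac : k = k₀ * (k₀⁻¹ * k) := by group
      have hσ : (k₀⁻¹ * k) • a = a := by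
        rw [mul_smul, hk, ← hk₀, inv_smul_smul]
      calc dist s (k • s) = dist s ((k₀ * (k₀⁻¹ * k)) • s) := by rw [← hfac]
        _ ≤ dist s (k₀ • s) + dist s ((k₀⁻¹ * k) • s) := sub _ _
        _ ≤ dist s (k₀ • s) + r := by
            have := hr (k₀⁻¹ * k) hσ
            linarith
        _ ≤ max 0 (dist s (k₀ • s) + r) := le_max_right _ _
    · exact ⟨0, le_refl 0, fun k hk => absurd ⟨k, hk⟩ h⟩
  choose F hF0 hFb using hF
  obtain ⟨E, hEfin, hE⟩ := hcocompact
  set W : Set V := (Prod.fst '' E) ∪ (Prod.snd '' E) with hWdef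
  have hWfin : W.Finite := (hEfin.image _).union (hEfin.image _)
  obtain ⟨M₁, hM₁⟩ := ((hWfin.prod hWfin).image (fun p : V × V => F p.1 p.2)).bddAbove
  obtain ⟨M₂, hM₂⟩ := (hWfin.image (fun x => F x v₀)).bddAbove
  obtain ⟨M₃, hM₃⟩ := (hWfin.image (fun x => F v₀ x)).bddAbove
  set D₁ : ℝ := max M₁ 0 with hD₁def
  set D₂ : ℝ := max (max M₂ M₃) 0 with hD₂def
  have hD₁0 : 0 ≤ D₁ := le_max_right _ _
  have hD₂0 : 0 ≤ D₂ := le_max_right _ _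
  obtain ⟨r₀, hr₀⟩ := hstab v₀ s
  set C : ℝ := D₁ + D₂ + D₂ + max r₀ 0 with hCdef
  have hC0 : 0 ≤ C := by positivity
  have hD₁C : D₁ ≤ C := by
    have : (0:ℝ) ≤ max r₀ 0 := le_max_right _ _
    simp only [hCdef]; linarith
  have h2D₂C : D₂ + D₂ ≤ C := by
    have : (0:ℝ) ≤ max r₀ 0 := le_max_right _ _
    simp only [hCdef]; linarith
  -- the key inductive lemma along walks
  have L : ∀ (u w : V) (p : Γ.Walk u w), 1 ≤ p.length →
      ∀ (a : G) (x : V), x ∈ W → a • x = u →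
      ∃ (b : G) (y : V), y ∈ W ∧ b • y = w ∧
        dist s ((a⁻¹ * b) • s) ≤ D₁ * p.length := by
    intro u w p
    induction p with
    | nil => intro h; simp at h
    | @cons u v w h q ih =>
      intro _ a x hxW hax
      obtain ⟨g₁, e₁, he₁, h11, h12⟩ := hE u v h
      have hk : (a⁻¹ * g₁) • e₁.1 = x := by
        rw [mul_smul, h11, ← hax, inv_smul_smul]
      have he11W : e₁.1 ∈ W := Or.inl ⟨e₁, he₁, rfl⟩
      have he12W : e₁.2 ∈ W := Or.inr ⟨e₁, he₁, rfl⟩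
      have hd1 : dist s ((a⁻¹ * g₁) • s) ≤ D₁ := by
        refine (hFb e₁.1 x _ hk).trans ?_
        refine le_trans ?_ (le_max_left M₁ 0)
        exact hM₁ ⟨(e₁.1, x), Set.mk_mem_prod he11W hxW, rfl⟩
      cases q with
      | nil =>
        refine ⟨g₁, e₁.2, he12W, h12, ?_⟩
        simpa using hd1
      | cons h' q' =>
        obtain ⟨b, y, hyW, hby, hd2⟩ := ih (by simp) g₁ e₁.2 he12W h12
        refine ⟨b, y, hyW, hby, ?_⟩
        have hfac : a⁻¹ * b = (a⁻¹ * g₁) * (g₁⁻¹ * b) := by group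
        calc dist s ((a⁻¹ * b) • s)
            = dist s (((a⁻¹ * g₁) * (g₁⁻¹ * b)) • s) := by rw [← hfac]
          _ ≤ dist s ((a⁻¹ * g₁) • s) + dist s ((g₁⁻¹ * b) • s) := sub _ _
          _ ≤ D₁ + D₁ * (SimpleGraph.Walk.cons h' q').length := by linarith
          _ = D₁ * ((SimpleGraph.Walk.cons h (SimpleGraph.Walk.cons h' q')).length) := by
              push_cast [SimpleGraph.Walk.length_cons]
              ring
  refine ⟨C, fun g => ?_⟩
  obtain ⟨p, hp⟩ := hconn.exists_walk_length_eq_dist v₀ (g • v₀)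
  rcases Nat.eq_zero_or_pos p.length with h0 | h1
  · have hfix : g • v₀ = v₀ := (p.eq_of_length_eq_zero h0).symm
    have hdist0 : Γ.dist v₀ (g • v₀) = 0 := by rw [← hp, h0]
    have hb : dist s (g • s) ≤ r₀ := hr₀ g hfix
    have : r₀ ≤ C := by
      have h1 : r₀ ≤ max r₀ 0 := le_max_left _ _
      simp only [hCdef]; linarith
    rw [hdist0]
    push_cast
    linarith
  · have hne : v₀ ≠ g • v₀ := by
      intro he
      have : Γ.dist v₀ (g • v₀) = 0 := by rw [← he, SimpleGraph.dist_self]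
      rw [this] at hp
      omega
    obtain ⟨v, h, q, rfl⟩ := SimpleGraph.Walk.exists_eq_cons_of_ne hne p
    obtain ⟨g₀, e₀, he₀, h01, h02⟩ := hE v₀ v h
    obtain ⟨b, y, hyW, hby, hd⟩ :=
      L v₀ (g • v₀) (SimpleGraph.Walk.cons h q) h1 g₀ e₀.1 (Or.inl ⟨e₀, he₀, rfl⟩) h01
    have hg0 : dist s (g₀ • s) ≤ D₂ := by
      refine (hFb e₀.1 v₀ g₀ h01).trans ?_
      refine le_trans (le_trans ?_ (le_max_left M₂ M₃)) (le_max_left _ 0)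
      exact hM₂ ⟨e₀.1, Or.inl ⟨e₀, he₀, rfl⟩, rfl⟩
    have hg2 : dist s ((b⁻¹ * g) • s) ≤ D₂ := by
      have hk2 : (b⁻¹ * g) • v₀ = y := by
        rw [mul_smul, ← hby, inv_smul_smul]
      refine (hFb v₀ y _ hk2).trans ?_
      refine le_trans (le_trans ?_ (le_max_right M₂ M₃)) (le_max_left _ 0)
      exact hM₃ ⟨y, hyW, rfl⟩
    have hfac : g = g₀ * ((g₀⁻¹ * b) * (b⁻¹ * g)) := by group
    have hstep : dist s (g • s) ≤ D₂ + (D₁ * (SimpleGraph.Walk.cons h q).length + D₂) := by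
      calc dist s (g • s) = dist s ((g₀ * ((g₀⁻¹ * b) * (b⁻¹ * g))) • s) := by rw [← hfac]
        _ ≤ dist s (g₀ • s) + dist s (((g₀⁻¹ * b) * (b⁻¹ * g)) • s) := sub _ _
        _ ≤ dist s (g₀ • s) + (dist s ((g₀⁻¹ * b) • s) + dist s ((b⁻¹ * g) • s)) := by
            have := sub (g₀⁻¹ * b) (b⁻¹ * g)
            linarith
        _ ≤ D₂ + (D₁ * (SimpleGraph.Walk.cons h q).length + D₂) := by linarith
    have hlen : ((SimpleGraph.Walk.cons h q).length : ℝ) = (Γ.dist v₀ (g • v₀) : ℝ) := by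
      exact_mod_cast congrArg (Nat.cast : ℕ → ℝ) hp
    have hn1 : (1:ℝ) ≤ (Γ.dist v₀ (g • v₀) : ℝ) := by
      rw [← hlen]
      exact_mod_cast h1
    have hmono : D₁ * (Γ.dist v₀ (g • v₀) : ℝ) ≤ C * (Γ.dist v₀ (g • v₀) : ℝ) := by
      have h0n : (0:ℝ) ≤ (Γ.dist v₀ (g • v₀) : ℝ) := by linarith
      nlinarith
    rw [hlen] at hstep
    nlinarith
end

section
/- There exist infinitely many positive 6-aperiodic words over the alphabet {a, b}; in fact, the number f(n) of positive 6-aperiodic words of length n over {a,b} that start and end with b grows exponentially in n (in particular, f(n) ≥ n for all sufficiently large n). -/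
/-- A word over the alphabet `{a, b}` (encoded as `List Bool`, with `b = true`) is
6-aperiodic if it contains no non-empty subword of the form `v⁶`. -/
def SixAperiodic (w : List Bool) : Prop :=
  ∀ v : List Bool, v ≠ [] → ¬ ((v ++ v ++ v ++ v ++ v ++ v) <:+: w)

/-- The number of (positive) 6-aperiodic words of length `n` over `{a, b}` that start and
end with `b`. -/
noncomputable def fcount (n : ℕ) : ℕ :=
  Set.ncard {w : List Bool |
    w.length = n ∧ SixAperiodic w ∧ w.head? = some true ∧ w.getLast? = some true}

/-!
Let `A n` be the set of 6-aperiodic words of length `n` beginning with `b`. Appending a letter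
to a word of `A n` either keeps it 6-aperiodic or creates a sixth power `v⁶` as a suffix; then
the new word is `z ++ v⁵` with `z = u ++ v ∈ A (n + 1 - 5 |v|)`, and it is determined by `z`
and `|v|`. Hence `2 |A n| ≤ |A (n + 1)| + ∑_{1 ≤ p ≤ (n+1)/6} |A (n + 1 - 5p)|`, and by induction
`|A (n + 1)| ≥ 3/2 |A n|`: the sum is at most `∑_p (2/3)^{4p} |A n| ≤ 16/65 |A n|`. Appending
only `b` gives the same inequality with `1` in place of `2`, so at least `49/65 |A n|` words of
`A (n + 1)` end with `b`.
-/

open Finset Filter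

theorem SixAperiodic.of_infix {w u : List Bool} (h : SixAperiodic w) (hu : u <:+: w) :
    SixAperiodic u := fun v hv hvu => h v hv (hvu.trans hu)

theorem sixAperiodic_of_length_le {w : List Bool} (h : w.length ≤ 5) : SixAperiodic w := by
  intro v hv hvw
  have := hvw.length_le
  have := List.length_pos_iff.mpr hv
  simp only [List.length_append] at *
  omega

theorem SixAperiodic.concat_or {w : List Bool} (hw : SixAperiodic w) (x : Bool) :
    SixAperiodic (w ++ [x]) ∨
      ∃ u v, v ≠ [] ∧ w ++ [x] = u ++ (v ++ v ++ v ++ v ++ v ++ v) := by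
  refine or_iff_not_imp_left.mpr fun h => ?_
  simp only [SixAperiodic, not_forall, not_not] at h
  obtain ⟨v, hv, hvw⟩ := h
  rcases List.infix_concat_iff.mp hvw with ⟨u, hu⟩ | hvw
  · exact ⟨u, v, hv, hu.symm⟩
  · exact absurd hvw (hw v hv)

def sixthPowerCompletion (p : ℕ) (z : List Bool) : List Bool :=
  z ++ z.rtake p ++ z.rtake p ++ z.rtake p ++ z.rtake p ++ z.rtake p

theorem sixthPowerCompletion_length_append (u v : List Bool) :
    sixthPowerCompletion v.length (u ++ v) = u ++ (v ++ v ++ v ++ v ++ v ++ v) := by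
  simp [sixthPowerCompletion, List.rtake]

-- The set `A n` above.
open scoped Classical in
noncomputable def aperiodicWords (n : ℕ) : Finset (List Bool) :=
  (List.finite_length_eq Bool n).toFinset.filter fun w => SixAperiodic w ∧ w.head? = some true

theorem mem_aperiodicWords {n : ℕ} {w : List Bool} :
    w ∈ aperiodicWords n ↔ w.length = n ∧ SixAperiodic w ∧ w.head? = some true := by
  simp [aperiodicWords]

theorem fcount_eq_card (n : ℕ) :
    fcount n = #((aperiodicWords n).filter fun w => w.getLast? = some true) := by
  rw [fcount, ← Set.ncard_coe_finset]
  congr 1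
  ext w
  simp [mem_aperiodicWords, and_assoc]

theorem card_aperiodicWords_one : #(aperiodicWords 1) = 1 := by
  rw [card_eq_one]
  refine ⟨[true], ext fun w => ?_⟩
  rw [mem_aperiodicWords, mem_singleton]
  constructor
  · rintro ⟨hlen, -, hhead⟩
    obtain ⟨a, rfl⟩ := List.length_eq_one_iff.mp hlen
    simpa using hhead
  · rintro rfl
    exact ⟨rfl, sixAperiodic_of_length_le (by simp), rfl⟩

noncomputable def sixthPowerCompletions (n : ℕ) : Finset (List Bool) :=
  (Icc 1 ((n + 1) / 6)).biUnion fun p => (aperiodicWords (n + 1 - 5 * p)).image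
    (sixthPowerCompletion p)

theorem card_sixthPowerCompletions_le (n : ℕ) :
    #(sixthPowerCompletions n) ≤
      ∑ p ∈ Icc 1 ((n + 1) / 6), #(aperiodicWords (n + 1 - 5 * p)) :=
  card_biUnion_le.trans (sum_le_sum fun _ _ => card_image_le)

theorem concat_mem_aperiodicWords_or {n : ℕ} {w : List Bool} (hw : w ∈ aperiodicWords n)
    (x : Bool) : w ++ [x] ∈ aperiodicWords (n + 1) ∨ w ++ [x] ∈ sixthPowerCompletions n := by
  obtain ⟨hlen, hap, hhead⟩ := mem_aperiodicWords.mp hw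
  have hw_ne : w ≠ [] := by rintro rfl; simp at hhead
  rcases hap.concat_or x with hap' | ⟨u, v, hv, hu⟩
  · left
    rw [mem_aperiodicWords, List.head?_append_of_ne_nil _ hw_ne]
    exact ⟨by simp [hlen], hap', hhead⟩
  right
  have hv_pos := List.length_pos_iff.mpr hv
  have hlen' : n + 1 = u.length + 6 * v.length := by
    have := congrArg List.length hu
    simp only [List.length_append, List.length_singleton] at this
    omega
  have hprefix : u ++ v <+: w := by
    have : u ++ v <+: w ++ [x] := ⟨v ++ v ++ v ++ v ++ v, by rw [hu]; simp⟩
    refine (List.prefix_concat_iff.mp this).resolve_left fun h => ?_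
    have := congrArg List.length h
    simp only [List.length_append, List.length_singleton] at this
    omega
  have hz : u ++ v ∈ aperiodicWords (n + 1 - 5 * v.length) := by
    refine mem_aperiodicWords.mpr
      ⟨by simp only [List.length_append]; omega, hap.of_infix hprefix.isInfix, ?_⟩
    obtain ⟨r, rfl⟩ := hprefix
    rwa [List.head?_append_of_ne_nil _ (by simp [hv])] at hhead
  exact mem_biUnion.mpr ⟨v.length, mem_Icc.mpr ⟨hv_pos, by omega⟩,
    mem_image.mpr ⟨u ++ v, hz, by rw [sixthPowerCompletion_length_append, hu]⟩⟩

theorem card_le_card_inter_add_sum {n : ℕ} {E : Finset (List Bool)}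
    (hE : ∀ e ∈ E, ∃ w ∈ aperiodicWords n, ∃ x, e = w ++ [x]) :
    #E ≤ #(E ∩ aperiodicWords (n + 1)) +
      ∑ p ∈ Icc 1 ((n + 1) / 6), #(aperiodicWords (n + 1 - 5 * p)) := by
  have hsub : E ⊆ (E ∩ aperiodicWords (n + 1)) ∪ sixthPowerCompletions n := by
    intro e he
    obtain ⟨w, hw, x, rfl⟩ := hE e he
    rcases concat_mem_aperiodicWords_or hw x with h | h
    · exact mem_union_left _ (mem_inter.mpr ⟨he, h⟩)
    · exact mem_union_right _ h
  calc #E ≤ #((E ∩ aperiodicWords (n + 1)) ∪ sixthPowerCompletions n) := card_le_card hsub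
    _ ≤ _ := (card_union_le _ _).trans (Nat.add_le_add_left (card_sixthPowerCompletions_le n) _)

theorem two_mul_card_aperiodicWords_le (n : ℕ) :
    2 * #(aperiodicWords n) ≤ #(aperiodicWords (n + 1)) +
      ∑ p ∈ Icc 1 ((n + 1) / 6), #(aperiodicWords (n + 1 - 5 * p)) := by
  set E := (aperiodicWords n ×ˢ (univ : Finset Bool)).image fun q => q.1 ++ [q.2]
  have hinj : Function.Injective fun q : List Bool × Bool => q.1 ++ [q.2] := by
    rintro ⟨w₁, x₁⟩ ⟨w₂, x₂⟩ h
    simpa using List.append_inj' h rfl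
  have hE : #E = 2 * #(aperiodicWords n) := by
    rw [card_image_of_injective _ hinj, card_product, card_univ, Fintype.card_bool, mul_comm]
  rw [← hE]
  refine (card_le_card_inter_add_sum fun e he => ?_).trans
    (Nat.add_le_add_right (card_le_card inter_subset_right) _)
  obtain ⟨⟨w, x⟩, hq, rfl⟩ := mem_image.mp he
  exact ⟨w, (mem_product.mp hq).1, x, rfl⟩

theorem card_aperiodicWords_le_card_filter_getLast (n : ℕ) :
    #(aperiodicWords n) ≤ #((aperiodicWords (n + 1)).filter fun w => w.getLast? = some true) +
      ∑ p ∈ Icc 1 ((n + 1) / 6), #(aperiodicWords (n + 1 - 5 * p)) := by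
  set E := (aperiodicWords n).image fun w => w ++ [true]
  have hE : #E = #(aperiodicWords n) :=
    card_image_of_injective _ fun w₁ w₂ h => (List.append_inj' h rfl).1
  rw [← hE]
  refine (card_le_card_inter_add_sum fun e he => ?_).trans (Nat.add_le_add_right ?_ _)
  · obtain ⟨w, hw, rfl⟩ := mem_image.mp he
    exact ⟨w, hw, true, rfl⟩
  · refine card_le_card fun e he => ?_
    obtain ⟨he, he'⟩ := mem_inter.mp he
    obtain ⟨w, -, rfl⟩ := mem_image.mp he
    exact mem_filter.mpr ⟨he', by simp⟩

section Growth

variable {t : ℕ → ℝ}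

theorem pow_mul_le_of_mul_le_succ {c : ℝ} (hc : 0 ≤ c) {m n : ℕ} (hmn : m ≤ n)
    (h : ∀ k, m ≤ k → k < n → c * t k ≤ t (k + 1)) : c ^ (n - m) * t m ≤ t n := by
  induction n, hmn using Nat.le_induction with
  | base => simp
  | succ n hmn ih =>
    calc c ^ (n + 1 - m) * t m = c * (c ^ (n - m) * t m) := by
          rw [Nat.sub_add_comm hmn, pow_succ']; ring
      _ ≤ c * t n := mul_le_mul_of_nonneg_left (ih fun k hk hkn => h k hk (by omega)) hc
      _ ≤ t (n + 1) := h n hmn (by omega)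

theorem sum_le_of_three_halves_mul_le_succ (ht : ∀ n, 0 ≤ t n) {n : ℕ}
    (h : ∀ k, 1 ≤ k → k < n → 3 / 2 * t k ≤ t (k + 1)) :
    ∑ p ∈ Icc 1 ((n + 1) / 6), t (n + 1 - 5 * p) ≤ 16 / 65 * t n := by
  have hterm : ∀ p ∈ Icc 1 ((n + 1) / 6), t (n + 1 - 5 * p) ≤ (16 / 81) ^ p * t n := by
    intro p hp
    obtain ⟨hp1, hpM⟩ := mem_Icc.mp hp
    have hp6 : p * 6 ≤ n + 1 := (Nat.le_div_iff_mul_le (by norm_num)).mp hpM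
    set m := n + 1 - 5 * p
    have hgrow := pow_mul_le_of_mul_le_succ (by norm_num) (show m ≤ n by omega)
      fun k hk hkn => h k (by omega) hkn
    calc t m = (2 / 3) ^ (n - m) * ((3 / 2) ^ (n - m) * t m) := by
          rw [← mul_assoc, ← mul_pow]; norm_num
      _ ≤ (2 / 3) ^ (4 * p) * t n := by
          -- `n - m = 5p - 1 ≥ 4p`
          refine mul_le_mul (pow_le_pow_of_le_one (by norm_num) (by norm_num) (by omega)) hgrow
            (mul_nonneg (by positivity) (ht m)) (by positivity)
      _ = (16 / 81) ^ p * t n := by rw [pow_mul]; norm_num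
  have hgeom : ∑ p ∈ Icc 1 ((n + 1) / 6), (16 / 81 : ℝ) ^ p ≤ 16 / 65 := by
    rw [← Ico_add_one_right_eq_Icc]
    exact (geom_sum_Ico_le_of_lt_one (by norm_num) (by norm_num)).trans_eq (by norm_num)
  calc ∑ p ∈ Icc 1 ((n + 1) / 6), t (n + 1 - 5 * p)
      ≤ ∑ p ∈ Icc 1 ((n + 1) / 6), (16 / 81) ^ p * t n := sum_le_sum hterm
    _ = (∑ p ∈ Icc 1 ((n + 1) / 6), (16 / 81 : ℝ) ^ p) * t n := by rw [sum_mul]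
    _ ≤ 16 / 65 * t n := mul_le_mul_of_nonneg_right hgeom (ht n)

theorem three_halves_mul_le_succ (ht : ∀ n, 0 ≤ t n)
    (hrec : ∀ n, 1 ≤ n →
      2 * t n ≤ t (n + 1) + ∑ p ∈ Icc 1 ((n + 1) / 6), t (n + 1 - 5 * p))
    (n : ℕ) (hn : 1 ≤ n) : 3 / 2 * t n ≤ t (n + 1) := by
  induction n using Nat.strong_induction_on with
  | _ n ih =>
    have := sum_le_of_three_halves_mul_le_succ ht fun k hk hkn => ih k hkn hk
    linarith [hrec n hn, ht n]

end Growth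

theorem three_halves_mul_card_aperiodicWords_le (n : ℕ) (hn : 1 ≤ n) :
    3 / 2 * (#(aperiodicWords n) : ℝ) ≤ #(aperiodicWords (n + 1)) :=
  three_halves_mul_le_succ (fun _ => Nat.cast_nonneg _)
    (fun n _ => by exact_mod_cast two_mul_card_aperiodicWords_le n) n hn

theorem pow_le_card_aperiodicWords (n : ℕ) (hn : 1 ≤ n) :
    (3 / 2 : ℝ) ^ (n - 1) ≤ #(aperiodicWords n) := by
  simpa [card_aperiodicWords_one] using pow_mul_le_of_mul_le_succ (by norm_num) hn
    fun k hk _ => three_halves_mul_card_aperiodicWords_le k hk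

theorem const_mul_pow_le_fcount (n : ℕ) (hn : 2 ≤ n) :
    196 / 585 * (3 / 2 : ℝ) ^ n ≤ fcount n := by
  obtain ⟨m, rfl⟩ : ∃ m, n = m + 1 := ⟨n - 1, by omega⟩
  have hlast : (#(aperiodicWords m) : ℝ) ≤ fcount (m + 1) +
      ∑ p ∈ Icc 1 ((m + 1) / 6), (#(aperiodicWords (m + 1 - 5 * p)) : ℝ) := by
    rw [fcount_eq_card]
    exact_mod_cast card_aperiodicWords_le_card_filter_getLast m
  have hsum := sum_le_of_three_halves_mul_le_succ (t := fun n => (#(aperiodicWords n) : ℝ))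
    (fun _ => Nat.cast_nonneg _) (n := m)
    fun k hk _ => three_halves_mul_card_aperiodicWords_le k hk
  have hm := pow_le_card_aperiodicWords m (by omega)
  have hpow : (3 / 2 : ℝ) ^ (m + 1) = (3 / 2) ^ 2 * (3 / 2) ^ (m - 1) := by
    rw [← pow_add]; congr 1; omega
  rw [hpow]
  linarith

theorem eventually_pow_le_of_const_mul_pow_le {f : ℕ → ℝ} {K r c : ℝ} (hK : 0 < K)
    (hc : 0 ≤ c) (hcr : c < r) {N : ℕ} (hf : ∀ n ≥ N, K * r ^ n ≤ f n) :
    ∀ᶠ n in atTop, c ^ n ≤ f n := by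
  have hr : 0 < r := hc.trans_lt hcr
  have hsmall : ∀ᶠ n in atTop, (c / r) ^ n < K :=
    (tendsto_pow_atTop_nhds_zero_of_lt_one (div_nonneg hc hr.le)
      ((div_lt_one hr).mpr hcr)).eventually (gt_mem_nhds hK)
  filter_upwards [hsmall, eventually_ge_atTop N] with n hn hnN
  calc c ^ n = (c / r) ^ n * r ^ n := by rw [← mul_pow, div_mul_cancel₀ _ hr.ne']
    _ ≤ K * r ^ n := by gcongr
    _ ≤ f n := hf n hnN

theorem eventually_nat_le_of_pow_le {f : ℕ → ℕ} {c : ℝ} (hc : 1 < c)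
    (hf : ∀ᶠ n in atTop, c ^ n ≤ (f n : ℝ)) : ∀ᶠ n in atTop, n ≤ f n := by
  have hlin : ∀ᶠ n : ℕ in atTop, (n : ℝ) ^ 1 / c ^ n < 1 :=
    (tendsto_pow_const_div_const_pow_of_one_lt 1 hc).eventually (gt_mem_nhds one_pos)
  filter_upwards [hf, hlin] with n hn hnc
  rw [pow_one, div_lt_one (by positivity)] at hnc
  exact_mod_cast hnc.le.trans hn

theorem infinite_setOf_sixAperiodic (h : ∃ᶠ n in atTop, fcount n ≠ 0) :
    {w : List Bool | SixAperiodic w}.Infinite := by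
  refine Set.Infinite.of_image List.length (Set.infinite_of_forall_exists_gt fun a => ?_)
  obtain ⟨n, han, hn⟩ := frequently_atTop.mp h (a + 1)
  obtain ⟨w, rfl, hw, -⟩ := Set.nonempty_of_ncard_ne_zero hn
  exact ⟨w.length, ⟨w, hw, rfl⟩, han⟩

/-- There are infinitely many positive 6-aperiodic words over `{a, b}`; in fact `fcount`
grows exponentially, and in particular `fcount n ≥ n` for all sufficiently large `n`. -/
theorem stmt15 :
    {w : List Bool | SixAperiodic w}.Infinite ∧
    (∃ c : ℝ, 1 < c ∧ ∃ N : ℕ, ∀ n ≥ N, c ^ n ≤ (fcount n : ℝ)) ∧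
    (∃ N : ℕ, ∀ n ≥ N, n ≤ fcount n) := by
  have hexp : ∀ᶠ n in atTop, (5 / 4 : ℝ) ^ n ≤ fcount n :=
    eventually_pow_le_of_const_mul_pow_le (by norm_num) (by norm_num) (by norm_num)
      const_mul_pow_le_fcount
  have hlin := eventually_nat_le_of_pow_le (by norm_num) hexp
  have hpos : ∀ᶠ n in atTop, fcount n ≠ 0 :=
    (hlin.and (eventually_gt_atTop 0)).mono fun n hn => by omega
  exact ⟨infinite_setOf_sixAperiodic hpos.frequently,
    ⟨5 / 4, by norm_num, eventually_atTop.mp hexp⟩, eventually_atTop.mp hlin⟩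
end
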